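/- The graph of lines of a finite projective rectangle of order (m,n) is strongly regular with parameters ν = n^2, r = (m+1)(n-1), λ = n + m(m-1) - 2, μ = m(m+1): every two adjacent vertices have exactly n + m(m-1) - 2 common neighbors, and every two non-adjacent vertices have exactly m(m+1) common neighbors. -/

import Mathlib

open scoped Classical

/-- A projective rectangle: an incidence structure satisfying axioms (A1)–(A6). -/
structure ProjRect (P L : Type*) where
  incid : P → L → Prop
  /-- (A4) the special point -/
  D : P
  /-- (A1) every two distinct points are incident with exactly one line -/
  A1 : ∀ p q : P, p ≠ q → ∃! l : L, incid p l ∧ incid q l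
  /-- (A2) there exist four points with no three collinear -/
  A2 : ∃ p1 p2 p3 p4 : P, p1 ≠ p2 ∧ p1 ≠ p3 ∧ p1 ≠ p4 ∧ p2 ≠ p3 ∧ p2 ≠ p4 ∧ p3 ≠ p4 ∧
    ∀ l : L, ¬(incid p1 l ∧ incid p2 l ∧ incid p3 l) ∧ ¬(incid p1 l ∧ incid p2 l ∧ incid p4 l) ∧
      ¬(incid p1 l ∧ incid p3 l ∧ incid p4 l) ∧ ¬(incid p2 l ∧ incid p3 l ∧ incid p4 l)
  /-- (A3) every line has at least three points -/
  A3 : ∀ l : L, ∃ p1 p2 p3 : P, p1 ≠ p2 ∧ p1 ≠ p3 ∧ p2 ≠ p3 ∧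
    incid p1 l ∧ incid p2 l ∧ incid p3 l
  /-- (A5) each special line intersects every other line in exactly one point -/
  A5 : ∀ s l : L, incid D s → l ≠ s → ∃! p : P, incid p s ∧ incid p l
  /-- (A6) Pasch-type axiom -/
  A6 : ∀ l1 l2 g h : L, ¬incid D l1 → ¬incid D l2 → (∃ p : P, incid p l1 ∧ incid p l2) →
    (∃ p1 p2 p3 p4 : P, p1 ≠ p2 ∧ p1 ≠ p3 ∧ p1 ≠ p4 ∧ p2 ≠ p3 ∧ p2 ≠ p4 ∧ p3 ≠ p4 ∧
      incid p1 g ∧ incid p1 l1 ∧ incid p2 g ∧ incid p2 l2 ∧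
      incid p3 h ∧ incid p3 l1 ∧ incid p4 h ∧ incid p4 l2) →
    ∃ p : P, incid p g ∧ incid p h

namespace ProjRect

variable {P L : Type*} (R : ProjRect P L)

/-- A line is special if it is incident with the special point `D`. -/
def SpecialLine (l : L) : Prop := R.incid R.D l

/-- A line is ordinary if it is not incident with `D`. -/
def OrdinaryLine (l : L) : Prop := ¬ R.incid R.D l

/-- A point is ordinary if it is not `D`. -/
def OrdinaryPoint (p : P) : Prop := p ≠ R.D

/-- The set of points of a line. -/
def points (l : L) : Set P := {p | R.incid p l}

/-- `R` has order `(m, n)`: there are `m+1` special lines, each with `n+1` points. -/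
def HasOrder (m n : ℕ) : Prop :=
  {l : L | R.SpecialLine l}.ncard = m + 1 ∧
  ∀ l : L, R.SpecialLine l → (R.points l).ncard = n + 1

/-- Nontrivial: there exist two disjoint ordinary lines (i.e. `R` is not a projective plane). -/
def Nontrivial : Prop :=
  ∃ l1 l2 : L, R.OrdinaryLine l1 ∧ R.OrdinaryLine l2 ∧ ∀ p : P, ¬(R.incid p l1 ∧ R.incid p l2)

/-- An incidence substructure `(Ps, Ls)` that is a projective plane. -/
def IsSubplane (Ps : Set P) (Ls : Set L) : Prop :=
  (∀ p ∈ Ps, ∀ q ∈ Ps, p ≠ q → ∃! l : L, l ∈ Ls ∧ R.incid p l ∧ R.incid q l) ∧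
  (∀ l ∈ Ls, ∀ l' ∈ Ls, l ≠ l' → ∃! p : P, p ∈ Ps ∧ R.incid p l ∧ R.incid p l') ∧
  (∀ l ∈ Ls, ∀ p : P, R.incid p l → p ∈ Ps) ∧
  (∃ p1 ∈ Ps, ∃ p2 ∈ Ps, ∃ p3 ∈ Ps, ∃ p4 ∈ Ps,
    p1 ≠ p2 ∧ p1 ≠ p3 ∧ p1 ≠ p4 ∧ p2 ≠ p3 ∧ p2 ≠ p4 ∧ p3 ≠ p4 ∧
    ∀ l ∈ Ls, ¬(R.incid p1 l ∧ R.incid p2 l ∧ R.incid p3 l) ∧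
      ¬(R.incid p1 l ∧ R.incid p2 l ∧ R.incid p4 l) ∧
      ¬(R.incid p1 l ∧ R.incid p3 l ∧ R.incid p4 l) ∧
      ¬(R.incid p2 l ∧ R.incid p3 l ∧ R.incid p4 l))

/-- A plane: a maximal subplane. -/
def IsPlane (Ps : Set P) (Ls : Set L) : Prop :=
  R.IsSubplane Ps Ls ∧
  ∀ Ps' Ls', R.IsSubplane Ps' Ls' → Ps ⊆ Ps' → Ls ⊆ Ls' → Ps = Ps' ∧ Ls = Ls'

/-- The graph of lines: vertices are the ordinary lines, adjacent iff they intersect. -/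
def lineGraph : SimpleGraph {l : L // R.OrdinaryLine l} where
  Adj l1 l2 := l1 ≠ l2 ∧ ∃ p : P, R.incid p l1.1 ∧ R.incid p l2.1
  symm := by
    constructor
    rintro a b ⟨hne, p, h1, h2⟩
    exact ⟨hne.symm, p, h2, h1⟩
  loopless := by
    constructor
    rintro a ⟨hne, -⟩
    exact hne rfl

end ProjRect


/-!
All counts come from two bijections given by joining points: if `p ∉ s` and `A ⊆ s`, the
lines through `p` meeting `A` correspond to `A`; if `A ⊆ u \ v` and `B ⊆ v \ u`, the lines
meeting both `A` and `B` correspond to `A × B`. Projecting from `D` (axiom A5) then shows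
that an ordinary line has `m + 1` points, an ordinary point lies on `n` ordinary lines, and
the ordinary lines are the `n²` joins of ordinary points of two fixed special lines. A common
neighbour of `u` and `v` either passes through their common point or joins `u \ v` to
`v \ u`; of these `k²` joins (`k = |u \ v|`) exactly `k` are special, one through each point
of `u \ v`. Hence `μ = k² - k` with `k = m + 1`, and `λ = (n - 2) + (k² - k)` with `k = m`.
-/

open Set

theorem Set.ncard_biUnion_of_ncard_eq {ι α : Type*} [Finite α] {t : Set ι} (ht : t.Finite)
    {s : ι → Set α} {k : ℕ} (hs : ∀ i ∈ t, (s i).ncard = k) (h : t.PairwiseDisjoint s) :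
    (⋃ i ∈ t, s i).ncard = t.ncard * k := by
  rw [ht.ncard_biUnion (fun _ _ => toFinite _) h, finsum_mem_congr rfl hs,
    finsum_mem_eq_finite_toFinset_sum _ ht, Finset.sum_const, smul_eq_mul,
    ncard_eq_toFinset_card t ht]

namespace ProjRect

variable {P L : Type*} (R : ProjRect P L)

def Meets (l : L) (A : Set P) : Prop := ∃ p ∈ A, R.incid p l

section Incidence

variable {R} {p q : P} {l l' : L}

theorem line_eq_of_incid (hpq : p ≠ q) (hp : R.incid p l) (hq : R.incid q l)
    (hp' : R.incid p l') (hq' : R.incid q l') : l = l' :=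
  (R.A1 p q hpq).unique ⟨hp, hq⟩ ⟨hp', hq'⟩

theorem point_eq_of_incid (hll' : l ≠ l') (hp : R.incid p l) (hp' : R.incid p l')
    (hq : R.incid q l) (hq' : R.incid q l') : p = q :=
  by_contra fun hpq => hll' (line_eq_of_incid hpq hp hq hp' hq')

theorem ne_D_of_incid (hl : R.OrdinaryLine l) (hp : R.incid p l) : p ≠ R.D :=
  fun h => hl (h ▸ hp)

variable (R) in
noncomputable def lineThrough (h : p ≠ q) : L := (R.A1 p q h).exists.choose

theorem incid_lineThrough_left (h : p ≠ q) : R.incid p (R.lineThrough h) :=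
  (R.A1 p q h).exists.choose_spec.1

theorem incid_lineThrough_right (h : p ≠ q) : R.incid q (R.lineThrough h) :=
  (R.A1 p q h).exists.choose_spec.2

theorem eq_lineThrough (h : p ≠ q) (hp : R.incid p l) (hq : R.incid q l) :
    l = R.lineThrough h :=
  line_eq_of_incid h hp hq (incid_lineThrough_left h) (incid_lineThrough_right h)

variable (R) in
theorem exists_ne_D : ∃ p : P, p ≠ R.D := by
  obtain ⟨p₁, p₂, -, -, h₁₂, -⟩ := R.A2
  by_cases h : p₁ = R.D
  · exact ⟨p₂, h ▸ h₁₂.symm⟩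
  · exact ⟨p₁, h⟩

theorem exists_specialLine_not_incid (hp : p ≠ R.D) :
    ∃ s, R.SpecialLine s ∧ ¬ R.incid p s := by
  obtain ⟨p₁, p₂, p₃, _, -, -, -, -, -, -, hcol⟩ := R.A2
  obtain ⟨q, hq⟩ : ∃ q, ¬ R.incid q (R.lineThrough hp) := by
    by_contra! h
    exact (hcol _).1 ⟨h p₁, h p₂, h p₃⟩
  have hqD : q ≠ R.D := by rintro rfl; exact hq (incid_lineThrough_right hp)
  refine ⟨R.lineThrough hqD, incid_lineThrough_right hqD, fun hps => hq ?_⟩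
  rw [← eq_lineThrough hp hps (incid_lineThrough_right hqD)]
  exact incid_lineThrough_left hqD

theorem exists_incid_of_specialLine {s l : L} (hs : R.SpecialLine s) (hl : R.OrdinaryLine l) :
    ∃ p, R.incid p s ∧ R.incid p l :=
  (R.A5 s l hs fun e => hl (e ▸ hs)).exists

theorem points_sdiff_D_subset {s s' : L} (hs : R.SpecialLine s) (hs' : R.SpecialLine s')
    (hss' : s ≠ s') : R.points s \ {R.D} ⊆ R.points s \ R.points s' :=
  fun _ ⟨hqs, hqD⟩ => ⟨hqs, fun hqs' => hqD (point_eq_of_incid hss' hqs hqs' hs hs')⟩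

end Incidence

section Counting

variable {R}

theorem ncard_lines_through_meets {p : P} {s : L} {A : Set P} (hp : ¬ R.incid p s)
    (hA : A ⊆ R.points s) : {l | R.incid p l ∧ R.Meets l A}.ncard = A.ncard := by
  have hne : ∀ q ∈ A, p ≠ q := fun q hq e => hp (e ▸ hA hq)
  symm
  refine ncard_congr (fun q hq => R.lineThrough (hne q hq))
    (fun q hq => ⟨incid_lineThrough_left _, q, hq, incid_lineThrough_right _⟩) ?_ ?_
  · intro q q' hq hq' he
    refine point_eq_of_incid (fun e => hp ?_) (incid_lineThrough_right (hne q hq)) (hA hq)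
      (he ▸ incid_lineThrough_right (hne q' hq')) (hA hq')
    exact e ▸ incid_lineThrough_left _
  · rintro l ⟨hpl, q, hq, hql⟩
    exact ⟨q, hq, (eq_lineThrough (hne q hq) hpl hql).symm⟩

theorem ncard_lines_meets_meets {u v : L} {A B : Set P} (hA : A ⊆ R.points u \ R.points v)
    (hB : B ⊆ R.points v \ R.points u) :
    {l | R.Meets l A ∧ R.Meets l B}.ncard = A.ncard * B.ncard := by
  have hne : ∀ x ∈ A ×ˢ B, x.1 ≠ x.2 := fun x hx e => (hA hx.1).2 (e ▸ (hB hx.2).1)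
  rw [← ncard_prod]
  symm
  refine ncard_congr (fun x hx => R.lineThrough (hne x hx))
    (fun x hx =>
      ⟨⟨x.1, hx.1, incid_lineThrough_left _⟩, ⟨x.2, hx.2, incid_lineThrough_right _⟩⟩)
    ?_ ?_
  · rintro ⟨q, r⟩ ⟨q', r'⟩ hx hx' he
    have hu : R.lineThrough (hne _ hx) ≠ u :=
      fun e => (hB hx.2).2 (e ▸ incid_lineThrough_right _)
    have hv : R.lineThrough (hne _ hx) ≠ v :=
      fun e => (hA hx.1).2 (e ▸ incid_lineThrough_left _)
    exact Prod.ext (point_eq_of_incid hu (incid_lineThrough_left _) (hA hx.1).1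
        (he ▸ incid_lineThrough_left _) (hA hx'.1).1)
      (point_eq_of_incid hv (incid_lineThrough_right _) (hB hx.2).1
        (he ▸ incid_lineThrough_right _) (hB hx'.2).1)
  · rintro l ⟨⟨q, hq, hql⟩, r, hr, hrl⟩
    exact ⟨(q, r), ⟨hq, hr⟩, (eq_lineThrough (hne (q, r) ⟨hq, hr⟩) hql hrl).symm⟩

end Counting

section Order

variable {R} {m n : ℕ}

theorem ncard_points_sdiff_D (h : R.HasOrder m n) {s : L} (hs : R.SpecialLine s) :
    (R.points s \ {R.D}).ncard = n := by
  rw [ncard_sdiff_singleton_of_mem (show R.D ∈ R.points s from hs), h.2 s hs, Nat.add_sub_cancel]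

theorem ncard_points_of_ordinaryLine (h : R.HasOrder m n) {u : L} (hu : R.OrdinaryLine u) :
    (R.points u).ncard = m + 1 := by
  rw [← h.1, ← ncard_lines_through_meets hu subset_rfl]
  congr 1
  ext l
  refine ⟨fun hl => hl.1, fun hl => ⟨hl, ?_⟩⟩
  obtain ⟨q, hql, hqu⟩ := exists_incid_of_specialLine hl hu
  exact ⟨q, hqu, hql⟩

theorem ncard_ordinaryLines_through (h : R.HasOrder m n) {p : P} (hp : p ≠ R.D) :
    {l | R.OrdinaryLine l ∧ R.incid p l}.ncard = n := by
  obtain ⟨s, hs, hps⟩ := exists_specialLine_not_incid hp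
  have : {l | R.OrdinaryLine l ∧ R.incid p l} =
      {l | R.incid p l ∧ R.Meets l (R.points s \ {R.D})} := by
    ext l
    constructor
    · rintro ⟨hl, hpl⟩
      obtain ⟨q, hqs, hql⟩ := exists_incid_of_specialLine hs hl
      exact ⟨hpl, q, ⟨hqs, ne_D_of_incid hl hql⟩, hql⟩
    · rintro ⟨hpl, q, ⟨hqs, hqD⟩, hql⟩
      refine ⟨fun hDl => hps ?_, hpl⟩
      rwa [line_eq_of_incid hqD hqs hs hql hDl]
  rw [this, ncard_lines_through_meets hps sdiff_subset, ncard_points_sdiff_D h hs]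

theorem ncard_ordinaryLines (h : R.HasOrder m n) : {l | R.OrdinaryLine l}.ncard = n * n := by
  obtain ⟨p, hp⟩ := R.exists_ne_D
  obtain ⟨s', hs', hps'⟩ := exists_specialLine_not_incid hp
  have hs : R.SpecialLine (R.lineThrough hp) := incid_lineThrough_right hp
  have hss' : R.lineThrough hp ≠ s' := fun e => hps' (e ▸ incid_lineThrough_left hp)
  have : {l | R.OrdinaryLine l} = {l | R.Meets l (R.points (R.lineThrough hp) \ {R.D}) ∧
      R.Meets l (R.points s' \ {R.D})} := by
    ext l
    constructor
    · intro hl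
      obtain ⟨q, hqs, hql⟩ := exists_incid_of_specialLine hs hl
      obtain ⟨r, hrs', hrl⟩ := exists_incid_of_specialLine hs' hl
      exact ⟨⟨q, ⟨hqs, ne_D_of_incid hl hql⟩, hql⟩,
        r, ⟨hrs', ne_D_of_incid hl hrl⟩, hrl⟩
    · rintro ⟨⟨q, ⟨hqs, hqD⟩, hql⟩, r, ⟨hrs', hrD⟩, hrl⟩ hDl
      exact hss' ((line_eq_of_incid hqD hqs hs hql hDl).trans
        (line_eq_of_incid hrD hrl hDl hrs' hs'))
  rw [this, ncard_lines_meets_meets (points_sdiff_D_subset hs hs' hss')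
    (points_sdiff_D_subset hs' hs hss'.symm), ncard_points_sdiff_D h hs, ncard_points_sdiff_D h hs']

theorem ncard_ordinaryLines_meets_sdiff [Finite L] {u v : L} (hu : R.OrdinaryLine u)
    (hv : R.OrdinaryLine v) :
    {l | R.OrdinaryLine l ∧ R.Meets l (R.points u \ R.points v) ∧
      R.Meets l (R.points v \ R.points u)}.ncard =
    (R.points u \ R.points v).ncard * (R.points v \ R.points u).ncard -
      (R.points u \ R.points v).ncard := by
  set A := R.points u \ R.points v
  set B := R.points v \ R.points u
  have hsub : {l | R.incid R.D l ∧ R.Meets l A} ⊆ {l | R.Meets l A ∧ R.Meets l B} := by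
    rintro l ⟨hDl, q, ⟨hqu, hqv⟩, hql⟩
    obtain ⟨r, hrl, hrv⟩ := exists_incid_of_specialLine hDl hv
    refine ⟨⟨q, ⟨hqu, hqv⟩, hql⟩, r, ⟨hrv, fun hru => hqv ?_⟩, hrl⟩
    rwa [point_eq_of_incid (fun e : l = u => hu (e ▸ hDl)) hql hqu hrl hru]
  have : {l | R.OrdinaryLine l ∧ R.Meets l A ∧ R.Meets l B} =
      {l | R.Meets l A ∧ R.Meets l B} \ {l | R.incid R.D l ∧ R.Meets l A} := by
    ext l
    simp only [OrdinaryLine, mem_ofPred_eq, mem_sdiff]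
    tauto
  rw [this, ncard_sdiff hsub, ncard_lines_meets_meets subset_rfl subset_rfl,
    ncard_lines_through_meets hu sdiff_subset]

variable (R) in
def neighborLines (u : L) : Set L := {l | R.OrdinaryLine l ∧ l ≠ u ∧ R.Meets l (R.points u)}

theorem ncard_neighborLines [Finite P] [Finite L] (h : R.HasOrder m n) {u : L}
    (hu : R.OrdinaryLine u) : (R.neighborLines u).ncard = (m + 1) * (n - 1) := by
  have : R.neighborLines u =
      ⋃ p ∈ R.points u, {l | R.OrdinaryLine l ∧ R.incid p l} \ {u} := by
    ext l
    simp only [neighborLines, Meets, mem_iUnion, mem_sdiff, mem_ofPred_eq, mem_singleton_iff]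
    constructor
    · rintro ⟨hl, hlu, p, hpu, hpl⟩
      exact ⟨p, hpu, ⟨hl, hpl⟩, hlu⟩
    · rintro ⟨p, hpu, ⟨hl, hpl⟩, hlu⟩
      exact ⟨hl, hlu, p, hpu, hpl⟩
  rw [this, ncard_biUnion_of_ncard_eq (toFinite _) (k := n - 1),
    ncard_points_of_ordinaryLine h hu]
  · intro p hpu
    have hu' : u ∈ {l | R.OrdinaryLine l ∧ R.incid p l} := ⟨hu, hpu⟩
    rw [ncard_sdiff_singleton_of_mem hu',
      ncard_ordinaryLines_through h (ne_D_of_incid hu hpu)]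
  · intro p hpu q hqu hpq
    rw [Function.onFun, disjoint_left]
    rintro l ⟨⟨-, hpl⟩, hlu⟩ ⟨⟨-, hql⟩, -⟩
    exact hlu (line_eq_of_incid hpq hpl hql hpu hqu)

theorem neighborLines_inter_eq_union (u v : L) :
    R.neighborLines u ∩ R.neighborLines v =
      {l | R.OrdinaryLine l ∧ l ≠ u ∧ l ≠ v ∧ R.Meets l (R.points u ∩ R.points v)} ∪
      {l | R.OrdinaryLine l ∧ R.Meets l (R.points u \ R.points v) ∧
        R.Meets l (R.points v \ R.points u)} := by
  ext l
  constructor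
  · rintro ⟨⟨hl, hlu, q, hqu, hql⟩, -, hlv, r, hrv, hrl⟩
    by_cases hqv : R.incid q v
    · exact Or.inl ⟨hl, hlu, hlv, q, ⟨hqu, hqv⟩, hql⟩
    by_cases hru : R.incid r u
    · exact Or.inl ⟨hl, hlu, hlv, r, ⟨hru, hrv⟩, hrl⟩
    exact Or.inr ⟨hl, ⟨q, ⟨hqu, hqv⟩, hql⟩, r, ⟨hrv, hru⟩, hrl⟩
  · rintro (⟨hl, hlu, hlv, q, ⟨hqu, hqv⟩, hql⟩ |
      ⟨hl, ⟨q, ⟨hqu, hqv⟩, hql⟩, r, ⟨hrv, hru⟩, hrl⟩)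
    · exact ⟨⟨hl, hlu, q, hqu, hql⟩, hl, hlv, q, hqv, hql⟩
    · exact ⟨⟨hl, fun e => hru (e ▸ hrl), q, hqu, hql⟩,
        hl, fun e => hqv (e ▸ hql), r, hrv, hrl⟩

theorem ncard_neighborLines_inter [Finite P] [Finite L] (h : R.HasOrder m n) {u v : L}
    (hu : R.OrdinaryLine u) (hv : R.OrdinaryLine v) {k : ℕ}
    (hk : (R.points u ∩ R.points v).ncard + k = m + 1) :
    (R.neighborLines u ∩ R.neighborLines v).ncard =
      {l | R.OrdinaryLine l ∧ l ≠ u ∧ l ≠ v ∧ R.Meets l (R.points u ∩ R.points v)}.ncard +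
      (k * k - k) := by
  have hsdiff {u v : L} (hu : R.OrdinaryLine u)
      (hk : (R.points u ∩ R.points v).ncard + k = m + 1) : (R.points u \ R.points v).ncard = k := by
    have := ncard_inter_add_ncard_sdiff_eq_ncard (R.points u) (R.points v)
    rw [ncard_points_of_ordinaryLine h hu] at this
    omega
  have hdisj : Disjoint
      {l | R.OrdinaryLine l ∧ l ≠ u ∧ l ≠ v ∧ R.Meets l (R.points u ∩ R.points v)}
      {l | R.OrdinaryLine l ∧ R.Meets l (R.points u \ R.points v) ∧
        R.Meets l (R.points v \ R.points u)} := by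
    rw [disjoint_left]
    rintro l ⟨-, hlu, -, q, ⟨hqu, hqv⟩, hql⟩ ⟨-, ⟨r, ⟨hru, hrv⟩, hrl⟩, -⟩
    exact hlu (line_eq_of_incid (fun e : q = r => hrv (e ▸ hqv)) hql hrl hqu hru)
  rw [neighborLines_inter_eq_union, ncard_union_eq hdisj, ncard_ordinaryLines_meets_sdiff hu hv,
    hsdiff hu hk, hsdiff hv (inter_comm (R.points u) _ ▸ hk)]

theorem ncard_neighborLines_inter_of_incid [Finite P] [Finite L] (h : R.HasOrder m n) {u v : L}
    (hu : R.OrdinaryLine u) (hv : R.OrdinaryLine v) (huv : u ≠ v) {p : P}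
    (hpu : R.incid p u) (hpv : R.incid p v) :
    (R.neighborLines u ∩ R.neighborLines v).ncard = n + m * (m - 1) - 2 := by
  have hinter : R.points u ∩ R.points v = {p} := Set.ext fun q =>
    ⟨fun hq => point_eq_of_incid huv hq.1 hq.2 hpu hpv, by rintro rfl; exact ⟨hpu, hpv⟩⟩
  have hthrough :
      {l | R.OrdinaryLine l ∧ l ≠ u ∧ l ≠ v ∧ R.Meets l (R.points u ∩ R.points v)} =
      {l | R.OrdinaryLine l ∧ R.incid p l} \ {u, v} := by
    ext l
    simp only [Meets, hinter, mem_singleton_iff, exists_eq_left, mem_ofPred_eq, mem_sdiff,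
      mem_insert_iff, not_or]
    tauto
  have hpair : {u, v} ⊆ {l | R.OrdinaryLine l ∧ R.incid p l} := by
    rintro l (rfl | rfl)
    exacts [⟨hu, hpu⟩, ⟨hv, hpv⟩]
  have hn : 2 ≤ n := by
    rw [← ncard_pair huv, ← ncard_ordinaryLines_through h (ne_D_of_incid hu hpu)]
    exact ncard_le_ncard hpair
  rw [ncard_neighborLines_inter h hu hv (k := m) (by rw [hinter, ncard_singleton, add_comm]),
    hthrough, ncard_sdiff hpair, ncard_ordinaryLines_through h (ne_D_of_incid hu hpu),
    ncard_pair huv, Nat.mul_sub_one]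
  omega

theorem ncard_neighborLines_inter_of_disjoint [Finite P] [Finite L] (h : R.HasOrder m n)
    {u v : L} (hu : R.OrdinaryLine u) (hv : R.OrdinaryLine v)
    (hdisj : ∀ p, ¬(R.incid p u ∧ R.incid p v)) :
    (R.neighborLines u ∩ R.neighborLines v).ncard = m * (m + 1) := by
  have hinter : R.points u ∩ R.points v = ∅ := eq_empty_of_forall_notMem hdisj
  rw [ncard_neighborLines_inter h hu hv (k := m + 1) (by rw [hinter, ncard_empty, zero_add]),
    hinter]
  simp only [Meets, mem_empty_iff_false, false_and, exists_false, and_false, ofPred_false,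
    ncard_empty, zero_add, ← Nat.mul_sub_one, Nat.add_sub_cancel, mul_comm]

end Order

section Graph

variable {R}

theorem image_val_neighborSet (u : {l : L // R.OrdinaryLine l}) :
    Subtype.val '' R.lineGraph.neighborSet u = R.neighborLines u.1 := by
  ext l
  constructor
  · rintro ⟨v, ⟨hne, p, hpu, hpv⟩, rfl⟩
    exact ⟨v.2, fun e => hne (Subtype.ext e.symm), p, hpu, hpv⟩
  · rintro ⟨hl, hlu, p, hpu, hpl⟩
    exact ⟨⟨l, hl⟩, ⟨fun e => hlu (congrArg Subtype.val e).symm, p, hpu, hpl⟩, rfl⟩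

theorem ncard_neighborSet (u : {l : L // R.OrdinaryLine l}) :
    (R.lineGraph.neighborSet u).ncard = (R.neighborLines u.1).ncard := by
  rw [← image_val_neighborSet, ncard_image_of_injective _ Subtype.val_injective]

theorem ncard_neighborSet_inter (u v : {l : L // R.OrdinaryLine l}) :
    (R.lineGraph.neighborSet u ∩ R.lineGraph.neighborSet v).ncard =
      (R.neighborLines u.1 ∩ R.neighborLines v.1).ncard := by
  rw [← image_val_neighborSet, ← image_val_neighborSet, ← image_inter Subtype.val_injective,
    ncard_image_of_injective _ Subtype.val_injective]

end Graph

end ProjRect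

/-- The graph of lines of a finite projective rectangle of order (m,n) is
strongly regular with parameters ν = n², r = (m+1)(n-1), λ = n + m(m-1) - 2, μ = m(m+1). -/
theorem stmt10 {P L : Type*} [Fintype P] [Fintype L] (R : ProjRect P L) (m n : ℕ)
    (h : R.HasOrder m n) :
    Nat.card {l : L // R.OrdinaryLine l} = n ^ 2 ∧
    (∀ v : {l : L // R.OrdinaryLine l},
      ((R.lineGraph).neighborSet v).ncard = (m + 1) * (n - 1)) ∧
    (∀ u v : {l : L // R.OrdinaryLine l}, (R.lineGraph).Adj u v →
      ((R.lineGraph).neighborSet u ∩ (R.lineGraph).neighborSet v).ncard = n + m * (m - 1) - 2) ∧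
    (∀ u v : {l : L // R.OrdinaryLine l}, u ≠ v → ¬(R.lineGraph).Adj u v →
      ((R.lineGraph).neighborSet u ∩ (R.lineGraph).neighborSet v).ncard = m * (m + 1)) := by
  refine ⟨?_, fun v => ?_, fun u v huv => ?_, fun u v huv hnadj => ?_⟩
  · exact (Nat.card_coe_set_eq {l | R.OrdinaryLine l}).trans
      ((ProjRect.ncard_ordinaryLines h).trans (sq n).symm)
  · rw [ProjRect.ncard_neighborSet, ProjRect.ncard_neighborLines h v.2]
  · obtain ⟨hne, p, hpu, hpv⟩ := huv
    rw [ProjRect.ncard_neighborSet_inter]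
    exact ProjRect.ncard_neighborLines_inter_of_incid h u.2 v.2 (Subtype.coe_ne_coe.2 hne) hpu hpv
  · rw [ProjRect.ncard_neighborSet_inter]
    exact ProjRect.ncard_neighborLines_inter_of_disjoint h u.2 v.2
      fun p hp => hnadj ⟨huv, p, hp⟩
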